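/- arXiv:2304.03342 — 4 statements merged into one kernel-verified Lean document; each statement's English description precedes it below -/
import Mathlib

section
/- Let α, β ∈ ℝ with −α ≥ β > 0. Then for every ℓ ∈ ℝ there exists a real solution λ of the reduced eigenvalue equation α + β·√(1 + λ + ℓ) = R(λ) satisfying λ > −ℓ. -/
open MeasureTheory

/-- The discrete (pole) part of the reduced Evans-function expression. -/
noncomputable def Rd (z : ℂ) : ℂ :=
  (6075 * (Real.pi : ℂ) ^ 2 / 8192) * (z - 5 / 4)⁻¹
    - (81 * (Real.pi : ℂ) ^ 2 / 8192) * (z + 3 / 4)⁻¹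

/-- The continuous-spectrum part of the reduced Evans-function expression. -/
noncomputable def Rc (z : ℂ) : ℂ :=
  ∫ κ in Set.Ioi (1 : ℝ),
    (((9 * Real.pi ^ 2 / 16) * κ ^ 4 * (1 + κ ^ 2) ^ 2 /
        ((κ ^ 2 + 9 / 4) * (κ ^ 2 + 1 / 4)) *
        (1 / Real.sinh (Real.pi * κ)) ^ 2 : ℝ) : ℂ) * (z + (κ : ℂ) ^ 2 + 1)⁻¹

/-- The full function `R = R_d + R_c`. -/
noncomputable def R (z : ℂ) : ℂ := Rd z + Rc z

/-- The domain `D = ℂ \ ({5/4, -3/4} ∪ (-∞, -2])`. -/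
def Dom : Set ℂ :=
  {z | z ≠ 5 / 4 ∧ z ≠ -3 / 4 ∧ ¬(z.im = 0 ∧ z.re ≤ -2)}

/-- `z` is a solution of the reduced eigenvalue equation
`α + β √(1 + z + ℓ) = R z`, with `z ∈ D` and `1 + z + ℓ ∉ (-∞, 0]`,
where the square root is the principal complex square root. -/
noncomputable def IsSolution (α β ℓ : ℝ) (z : ℂ) : Prop :=
  z ∈ Dom ∧ ¬((1 + z + (ℓ : ℂ)).im = 0 ∧ (1 + z + (ℓ : ℂ)).re ≤ 0) ∧
    (α : ℂ) + (β : ℂ) * (1 + z + (ℓ : ℂ)) ^ ((1 : ℂ) / 2) = R z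


noncomputable def wght (κ : ℝ) : ℝ :=
  (9 * Real.pi ^ 2 / 16) * κ ^ 4 * (1 + κ ^ 2) ^ 2 /
        ((κ ^ 2 + 9 / 4) * (κ ^ 2 + 1 / 4)) * (1 / Real.sinh (Real.pi * κ)) ^ 2

lemma wght_nonneg (κ : ℝ) : 0 ≤ wght κ := by
  unfold wght; positivity

lemma wght_meas : Measurable wght := by
  unfold wght; fun_prop

lemma pi_gt : (3.14 : ℝ) < Real.pi := by
  have := Real.pi_gt_d6; linarith

lemma wght_le {κ : ℝ} (hκ : 1 ≤ κ) : wght κ ≤ 36 * Real.pi ^ 2 * Real.exp (-κ) := by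
  have hκ0 : (0:ℝ) < κ := by linarith
  have hπ := pi_gt
  have hπκ : (3.14:ℝ) ≤ Real.pi * κ := by nlinarith
  have h2' := Real.add_one_le_exp (Real.pi * κ)
  have h1 : Real.exp (-(Real.pi * κ)) ≤ 1 := by
    rw [Real.exp_le_one_iff]; linarith
  have hs : Real.exp (Real.pi * κ) / 4 ≤ Real.sinh (Real.pi * κ) := by
    rw [Real.sinh_eq]; linarith
  have hsp : (0:ℝ) < Real.sinh (Real.pi * κ) := by
    have : (0:ℝ) < Real.exp (Real.pi * κ) / 4 := by positivity
    linarith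
  have hcsch : (1 / Real.sinh (Real.pi * κ)) ^ 2 ≤ 16 * Real.exp (-(2 * Real.pi * κ)) := by
    have h1 : 1 / Real.sinh (Real.pi * κ) ≤ 1 / (Real.exp (Real.pi * κ) / 4) :=
      one_div_le_one_div_of_le (by positivity) hs
    have h2 : 1 / (Real.exp (Real.pi * κ) / 4) = 4 * Real.exp (-(Real.pi * κ)) := by
      rw [Real.exp_neg]; field_simp
    rw [h2] at h1
    have h0 : (0:ℝ) ≤ 1 / Real.sinh (Real.pi * κ) := by positivity
    calc (1 / Real.sinh (Real.pi * κ)) ^ 2 ≤ (4 * Real.exp (-(Real.pi * κ))) ^ 2 := by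
          apply pow_le_pow_left₀ h0 h1
      _ = 16 * Real.exp (-(2 * Real.pi * κ)) := by
          rw [show (-(2 * Real.pi * κ)) = (-(Real.pi * κ)) + (-(Real.pi * κ)) by ring,
            Real.exp_add]; ring
  -- ratio bound: κ^4 (1+κ²)² / ((κ²+9/4)(κ²+1/4)) ≤ 4 κ^4
  have hden : (0:ℝ) < (κ ^ 2 + 9 / 4) * (κ ^ 2 + 1 / 4) := by positivity
  have hratio : κ ^ 4 * (1 + κ ^ 2) ^ 2 / ((κ ^ 2 + 9 / 4) * (κ ^ 2 + 1 / 4)) ≤ 4 * κ ^ 4 := by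
    rw [div_le_iff₀ hden]; nlinarith [sq_nonneg κ, sq_nonneg (κ^2-1)]
  -- κ^4 ≤ exp((2π-1)κ)
  have hk4 : κ ^ 4 * Real.exp (-(2 * Real.pi * κ)) ≤ Real.exp (-κ) := by
    have h5 : κ ^ 4 ≤ Real.exp (4 * κ) := by
      have h6 : κ + 1 ≤ Real.exp κ := Real.add_one_le_exp κ
      have h7 : κ ≤ Real.exp κ := by linarith
      calc κ ^ 4 = κ * κ * κ * κ := by ring
        _ ≤ Real.exp κ * Real.exp κ * Real.exp κ * Real.exp κ := by
            have he : (0:ℝ) < Real.exp κ := Real.exp_pos κ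
            gcongr <;> linarith
        _ = Real.exp (4 * κ) := by rw [← Real.exp_add, ← Real.exp_add, ← Real.exp_add]; ring_nf
    have h8 : Real.exp (4 * κ) * Real.exp (-(2 * Real.pi * κ)) ≤ Real.exp (-κ) := by
      rw [← Real.exp_add, Real.exp_le_exp]; nlinarith
    calc κ ^ 4 * Real.exp (-(2 * Real.pi * κ))
        ≤ Real.exp (4 * κ) * Real.exp (-(2 * Real.pi * κ)) := by
          gcongr
      _ ≤ Real.exp (-κ) := h8
  unfold wght
  have step : (9 * Real.pi ^ 2 / 16) * κ ^ 4 * (1 + κ ^ 2) ^ 2 /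
        ((κ ^ 2 + 9 / 4) * (κ ^ 2 + 1 / 4)) * (1 / Real.sinh (Real.pi * κ)) ^ 2
      ≤ (9 * Real.pi ^ 2 / 16) * (4 * κ ^ 4) * (16 * Real.exp (-(2 * Real.pi * κ))) := by
    have e1 : (9 * Real.pi ^ 2 / 16) * κ ^ 4 * (1 + κ ^ 2) ^ 2 /
        ((κ ^ 2 + 9 / 4) * (κ ^ 2 + 1 / 4))
        = (9 * Real.pi ^ 2 / 16) * (κ ^ 4 * (1 + κ ^ 2) ^ 2 /
        ((κ ^ 2 + 9 / 4) * (κ ^ 2 + 1 / 4))) := by ring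
    rw [e1]
    apply mul_le_mul
    · apply mul_le_mul_of_nonneg_left hratio (by positivity)
    · exact hcsch
    · positivity
    · positivity
  calc _ ≤ (9 * Real.pi ^ 2 / 16) * (4 * κ ^ 4) * (16 * Real.exp (-(2 * Real.pi * κ))) := step
    _ = 36 * Real.pi ^ 2 * (κ ^ 4 * Real.exp (-(2 * Real.pi * κ))) := by ring
    _ ≤ 36 * Real.pi ^ 2 * Real.exp (-κ) := by
        apply mul_le_mul_of_nonneg_left hk4 (by positivity)

lemma wght_int : IntegrableOn wght (Set.Ioi (1:ℝ)) := by
  apply Integrable.mono' ((exp_neg_integrableOn_Ioi 1 (by norm_num : (0:ℝ) < 1)).const_mul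
    (36 * Real.pi ^ 2))
  · exact (wght_meas.aestronglyMeasurable).restrict
  · rw [ae_restrict_iff' measurableSet_Ioi]
    filter_upwards with κ hκ
    rw [Real.norm_eq_abs, abs_of_nonneg (wght_nonneg κ)]
    have := wght_le (le_of_lt hκ)
    simpa [neg_mul, one_mul] using this

noncomputable def Rcr (x : ℝ) : ℝ := ∫ κ in Set.Ioi (1:ℝ), wght κ / (x + κ ^ 2 + 1)

lemma F_int {x : ℝ} (hx : (0:ℝ) ≤ x) :
    IntegrableOn (fun κ => wght κ / (x + κ ^ 2 + 1)) (Set.Ioi (1:ℝ)) := by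
  apply Integrable.mono' wght_int
  · exact ((wght_meas.div (by fun_prop)).aestronglyMeasurable).restrict
  · rw [ae_restrict_iff' measurableSet_Ioi]
    filter_upwards with κ hκ
    have hκ1 : (1:ℝ) < κ := hκ
    have hd : (1:ℝ) ≤ x + κ ^ 2 + 1 := by nlinarith
    rw [Real.norm_eq_abs, abs_of_nonneg (div_nonneg (wght_nonneg κ) (by linarith))]
    calc wght κ / (x + κ ^ 2 + 1) ≤ wght κ / 1 := by
          apply div_le_div_of_nonneg_left (wght_nonneg κ) (by norm_num) hd
      _ = wght κ := by ring

lemma Rc_real (x : ℝ) : Rc (x : ℂ) = ((Rcr x : ℝ) : ℂ) := by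
  unfold Rc Rcr
  calc _ = ∫ κ in Set.Ioi (1:ℝ), ((wght κ / (x + κ ^ 2 + 1) : ℝ) : ℂ) := by
        apply setIntegral_congr_fun measurableSet_Ioi
        intro κ _
        unfold wght
        push_cast
        ring
    _ = _ := integral_ofReal

lemma Rcr_nonneg {x : ℝ} (hx : (0:ℝ) ≤ x) : 0 ≤ Rcr x := by
  apply setIntegral_nonneg measurableSet_Ioi
  intro κ hκ
  have : (1:ℝ) < κ := hκ
  apply div_nonneg (wght_nonneg κ)
  nlinarith

noncomputable def Iw : ℝ := ∫ κ in Set.Ioi (1:ℝ), wght κ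

lemma Rcr_le {x : ℝ} (hx : (0:ℝ) ≤ x) : Rcr x ≤ Iw := by
  apply setIntegral_mono_on (F_int hx) wght_int measurableSet_Ioi
  intro κ hκ
  have hκ1 : (1:ℝ) < κ := hκ
  have hd : (1:ℝ) ≤ x + κ ^ 2 + 1 := by nlinarith
  calc wght κ / (x + κ ^ 2 + 1) ≤ wght κ / 1 :=
        div_le_div_of_nonneg_left (wght_nonneg κ) (by norm_num) hd
    _ = wght κ := by ring

lemma Rcr_contAt {x₀ : ℝ} (hx : (0:ℝ) < x₀) : ContinuousAt Rcr x₀ := by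
  apply continuousAt_of_dominated (bound := wght)
  · filter_upwards with x
    exact ((wght_meas.div (by fun_prop)).aestronglyMeasurable).restrict
  · filter_upwards [eventually_gt_nhds hx] with x hx0
    rw [ae_restrict_iff' measurableSet_Ioi]
    filter_upwards with κ hκ
    have hκ1 : (1:ℝ) < κ := hκ
    have hd : (1:ℝ) ≤ x + κ ^ 2 + 1 := by nlinarith
    rw [Real.norm_eq_abs, abs_of_nonneg (div_nonneg (wght_nonneg κ) (by linarith))]
    calc wght κ / (x + κ ^ 2 + 1) ≤ wght κ / 1 :=
          div_le_div_of_nonneg_left (wght_nonneg κ) (by norm_num) hd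
      _ = wght κ := by ring
  · exact wght_int
  · rw [ae_restrict_iff' measurableSet_Ioi]
    filter_upwards with κ hκ
    have hκ1 : (1:ℝ) < κ := hκ
    have hd : x₀ + κ ^ 2 + 1 ≠ 0 := by nlinarith
    exact (continuousAt_const.div (by fun_prop) hd)

/-- real version of Rd -/
noncomputable def Rdr (x : ℝ) : ℝ :=
  (6075 * Real.pi ^ 2 / 8192) * (x - 5 / 4)⁻¹ - (81 * Real.pi ^ 2 / 8192) * (x + 3 / 4)⁻¹

lemma Rd_real (x : ℝ) : Rd (x : ℂ) = ((Rdr x : ℝ) : ℂ) := by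
  unfold Rd Rdr
  push_cast
  ring

lemma Rdr_pos {x : ℝ} (hx : 5/4 < x) : 0 < Rdr x := by
  unfold Rdr
  have h1 : (0:ℝ) < x - 5/4 := by linarith
  have h2 : (0:ℝ) < x + 3/4 := by linarith
  have hπ : (0:ℝ) < Real.pi ^ 2 := by positivity
  have e1 : (81 * Real.pi ^ 2 / 8192) * (x + 3 / 4)⁻¹ < (6075 * Real.pi ^ 2 / 8192) * (x - 5 / 4)⁻¹ := by
    apply mul_lt_mul' ?_ ?_ ?_ ?_
    · nlinarith
    · apply inv_strictAnti₀ h1; linarith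
    · positivity
    · positivity
  linarith

lemma Rdr_le {x : ℝ} (hx : 9/4 ≤ x) : Rdr x ≤ 6075 * Real.pi ^ 2 / 8192 := by
  unfold Rdr
  have h1 : (1:ℝ) ≤ x - 5/4 := by linarith
  have h2 : (0:ℝ) < x + 3/4 := by linarith
  have h3 : (x - 5/4)⁻¹ ≤ 1 := by
    rw [inv_le_one_iff₀]; right; linarith
  have h4 : (0:ℝ) ≤ (81 * Real.pi ^ 2 / 8192) * (x + 3 / 4)⁻¹ := by positivity
  have h5 : (6075 * Real.pi ^ 2 / 8192) * (x - 5 / 4)⁻¹ ≤ 6075 * Real.pi ^ 2 / 8192 * 1 := by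
    apply mul_le_mul_of_nonneg_left h3 (by positivity)
  linarith

lemma Iw_nonneg : 0 ≤ Iw :=
  setIntegral_nonneg measurableSet_Ioi (fun κ _ => wght_nonneg κ)

lemma key (α β ℓ : ℝ) (hβ : 0 < β) (hαβ : β ≤ -α) (x₀ : ℝ) (h54 : 5/4 < x₀)
    (hℓx : -ℓ ≤ x₀)
    (hg0 : 0 < Rdr x₀ + Rcr x₀ - α - β * Real.sqrt (1 + x₀ + ℓ)) :
    ∃ x : ℝ, IsSolution α β ℓ (x : ℂ) ∧ -ℓ < x := by
  set g : ℝ → ℝ := fun x => Rdr x + Rcr x - α - β * Real.sqrt (1 + x + ℓ) with hg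
  set a : ℝ := 6075 * Real.pi ^ 2 / 8192 with ha
  have ha0 : 0 < a := by positivity
  set T : ℝ := (a + Iw - α) / β + 1 with hT
  have hT0 : 0 < T := by
    have : 0 < a + Iw - α := by nlinarith [Iw_nonneg]
    have h9 : 0 < (a + Iw - α) / β := by positivity
    rw [hT]; linarith
  set X : ℝ := max (max (9/4) x₀) (T^2 - 1 - ℓ) with hX
  have hX94 : 9/4 ≤ X := le_trans (le_max_left _ _) (le_max_left _ _)
  have hXx₀ : x₀ ≤ X := le_trans (le_max_right _ _) (le_max_left _ _)
  have hXT : T^2 - 1 - ℓ ≤ X := le_max_right _ _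
  have hgX : g X < 0 := by
    have h1 : Rdr X ≤ a := Rdr_le hX94
    have h2 : Rcr X ≤ Iw := Rcr_le (by linarith)
    have h3 : T ≤ Real.sqrt (1 + X + ℓ) := by
      have : T^2 ≤ 1 + X + ℓ := by linarith
      calc T = Real.sqrt (T^2) := (Real.sqrt_sq hT0.le).symm
        _ ≤ Real.sqrt (1 + X + ℓ) := Real.sqrt_le_sqrt this
    have h4 : a + Iw - α + β ≤ β * Real.sqrt (1 + X + ℓ) := by
      have : β * T ≤ β * Real.sqrt (1 + X + ℓ) := mul_le_mul_of_nonneg_left h3 hβ.le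
      have hbt : β * T = a + Iw - α + β := by
        rw [hT]; field_simp
      linarith
    simp only [hg]
    linarith
  -- continuity
  have hcont : ContinuousOn g (Set.Icc x₀ X) := by
    apply ContinuousOn.sub
    apply ContinuousOn.sub
    apply ContinuousOn.add
    · unfold Rdr
      apply ContinuousOn.sub
      · apply ContinuousOn.mul continuousOn_const
        apply ContinuousOn.inv₀ (by fun_prop)
        intro x hx
        have : 5/4 < x := lt_of_lt_of_le h54 hx.1
        intro h; apply absurd h; intro h'; linarith [sub_eq_zero.mp h']
      · apply ContinuousOn.mul continuousOn_const
        apply ContinuousOn.inv₀ (by fun_prop)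
        intro x hx
        have : 5/4 < x := lt_of_lt_of_le h54 hx.1
        intro h; nlinarith [h]
    · intro x hx
      have : 5/4 < x := lt_of_lt_of_le h54 hx.1
      exact (Rcr_contAt (by linarith)).continuousWithinAt
    · exact continuousOn_const
    · apply ContinuousOn.mul continuousOn_const
      apply Continuous.continuousOn
      continuity
  have h0mem : (0:ℝ) ∈ Set.Icc (g X) (g x₀) := ⟨hgX.le, hg0.le⟩
  obtain ⟨c, hcmem, hgc⟩ := intermediate_value_Icc' hXx₀ hcont h0mem
  have hcx₀ : x₀ ≤ c := hcmem.1
  have hcne : c ≠ x₀ := by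
    intro h; rw [h] at hgc; simp only [hg] at hgc; linarith
  have hcgt : x₀ < c := lt_of_le_of_ne hcx₀ (Ne.symm hcne)
  have hc54 : 5/4 < c := lt_trans h54 hcgt
  have hcℓ : -ℓ < c := lt_of_le_of_lt hℓx hcgt
  have h1cl : (0:ℝ) < 1 + c + ℓ := by linarith
  refine ⟨c, ⟨⟨?_, ?_, ?_⟩, ?_, ?_⟩, hcℓ⟩
  · intro h
    rw [show ((5:ℂ)/4) = ((5/4:ℝ):ℂ) by norm_num] at h
    have := Complex.ofReal_inj.mp h
    linarith
  · intro h
    rw [show (-(3:ℂ)/4) = ((-3/4:ℝ):ℂ) by norm_num] at h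
    have := Complex.ofReal_inj.mp h
    linarith
  · intro ⟨_, h⟩
    rw [Complex.ofReal_re] at h
    linarith
  · intro ⟨_, h⟩
    have : (1 + (c:ℂ) + (ℓ:ℂ)).re = 1 + c + ℓ := by simp
    rw [this] at h
    linarith
  · have hcast : (1 + (c:ℂ) + (ℓ:ℂ)) = ((1 + c + ℓ : ℝ) : ℂ) := by push_cast; ring
    rw [hcast, show ((1:ℂ)/2) = (((1/2:ℝ)):ℂ) by norm_num,
      ← Complex.ofReal_cpow h1cl.le, ← Real.sqrt_eq_rpow]
    show (α:ℂ) + (β:ℂ) * ((Real.sqrt (1+c+ℓ) : ℝ):ℂ) = R (c:ℂ)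
    unfold R
    rw [Rd_real, Rc_real]
    have : α + β * Real.sqrt (1+c+ℓ) = Rdr c + Rcr c := by
      simp only [hg] at hgc; linarith
    exact_mod_cast congrArg Complex.ofReal this

/-- If `-α ≥ β > 0`, then for every `ℓ` there is a real solution `λ > -ℓ`. -/
theorem stmt2 (α β : ℝ) (hβ : 0 < β) (hαβ : β ≤ -α) (ℓ : ℝ) :
    ∃ x : ℝ, IsSolution α β ℓ (x : ℂ) ∧ -ℓ < x := by
  set a : ℝ := 6075 * Real.pi ^ 2 / 8192 with ha
  set b : ℝ := 81 * Real.pi ^ 2 / 8192 with hb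
  have ha0 : 0 < a := by positivity
  have hb0 : 0 < b := by positivity
  by_cases hcase : 5/4 < -ℓ
  · -- x₀ = -ℓ
    apply key α β ℓ hβ hαβ (-ℓ) hcase le_rfl
    have hs : Real.sqrt (1 + -ℓ + ℓ) = 1 := by
      rw [show (1 + -ℓ + ℓ) = 1 by ring, Real.sqrt_one]
    rw [hs]
    have h1 := Rdr_pos hcase
    have h2 := Rcr_nonneg (show (0:ℝ) ≤ -ℓ by linarith)
    linarith
  · push_neg at hcase
    -- x₀ = 5/4 + δ
    set K : ℝ := b - α + β * Real.sqrt (13/4 + ℓ) with hK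
    have hK0 : 0 < K := by
      have h : 0 ≤ Real.sqrt (13/4 + ℓ) := Real.sqrt_nonneg _
      rw [hK]; nlinarith
    set δ : ℝ := min 1 (a / (2 * K)) with hδ
    have hδ0 : 0 < δ := lt_min one_pos (by positivity)
    have hδ1 : δ ≤ 1 := min_le_left _ _
    have hδK : K < a / δ := by
      have h1 : δ ≤ a / (2 * K) := min_le_right _ _
      have h2 : 2 * K * δ ≤ a := by
        rw [← le_div_iff₀' (by positivity)]; exact h1
      rw [lt_div_iff₀ hδ0]; nlinarith
    apply key α β ℓ hβ hαβ (5/4 + δ) (by linarith) (by linarith)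
    have hℓ : (-5/4:ℝ) ≤ ℓ := by linarith
    have h1 : Rdr (5/4 + δ) = a * δ⁻¹ - b * (5/4 + δ + 3/4)⁻¹ := by
      unfold Rdr; rw [← ha, ← hb]; ring_nf
    have h2 : b * (5/4 + δ + 3/4)⁻¹ ≤ b := by
      have : (5/4 + δ + 3/4)⁻¹ ≤ 1 := by
        rw [inv_le_one_iff₀]; right; linarith
      nlinarith
    have h3 : β * Real.sqrt (1 + (5/4 + δ) + ℓ) ≤ β * Real.sqrt (13/4 + ℓ) := by
      apply mul_le_mul_of_nonneg_left _ hβ.le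
      apply Real.sqrt_le_sqrt; linarith
    have h4 : 0 ≤ Rcr (5/4 + δ) := Rcr_nonneg (by linarith)
    have h5 : a / δ = a * δ⁻¹ := div_eq_mul_inv a δ
    rw [h1]
    linarith [hδK]
end

section
/- Let α, β ∈ ℝ with 0 ≤ −α < β. Then there exists ℓ < −5/4 such that every solution λ of the reduced eigenvalue equation α + β·√(1 + λ + ℓ) = R(λ) satisfies Re λ < −ℓ. -/
open MeasureTheory

/-!
If `Re λ ≥ -ℓ`, the argument of the square root has real part at least `1`, hence so does its
principal square root, and the left-hand side has real part at least `α + β > 0`. On the other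
hand `‖R λ‖ ≤ 217 π² / (Re λ - 5/4)`: the two poles contribute at most `π² / (Re λ - 5/4)`, and
since `csch² (πκ)` decays like `e^{-2πκ}` the integral contributes `O(1 / (Re λ + 2))`.
Taking `-ℓ = 5/4 + 2 · 217 π² / (α + β)` makes the two estimates incompatible.
-/

open Set Real

lemma Complex.sqrt_re_le_re_cpow_half (w : ℂ) : √w.re ≤ (w ^ (1 / 2 : ℂ)).re := by
  rw [one_div, Complex.cpow_inv_two_re]
  exact Real.sqrt_le_sqrt (by linarith [Complex.re_le_norm w])

lemma Complex.norm_inv_le_inv_of_le_re {w : ℂ} {r : ℝ} (hr : 0 < r) (h : r ≤ w.re) :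
    ‖w⁻¹‖ ≤ r⁻¹ := by
  rw [norm_inv]
  exact inv_anti₀ hr (h.trans (Complex.re_le_norm w))

lemma pow_four_le_exp {x : ℝ} (hx : 0 ≤ x) : x ^ 4 ≤ 24 * exp x := by
  have h := Real.pow_div_factorial_le_exp _ hx 4
  norm_num [Nat.factorial] at h
  linarith

lemma exp_div_four_le_sinh {x : ℝ} (hx : 1 ≤ x) : exp x / 4 ≤ sinh x := by
  have h1 : exp (-x) ≤ 1 := exp_le_one_iff.2 (by linarith)
  have h2 : 2 ≤ exp x := by linarith [add_one_le_exp x]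
  rw [sinh_eq]
  linarith

lemma one_div_sinh_sq_le {x : ℝ} (hx : 1 ≤ x) : (1 / sinh x) ^ 2 ≤ 16 * exp (-(2 * x)) := by
  have hsinh := exp_div_four_le_sinh hx
  have hpos : 0 < sinh x := by linarith [exp_pos x]
  have hle : 1 / sinh x ≤ 4 * exp (-x) := by
    rw [div_le_iff₀ hpos, exp_neg]
    calc (1 : ℝ) = 4 * (exp x)⁻¹ * (exp x / 4) := by field_simp
      _ ≤ 4 * (exp x)⁻¹ * sinh x := by gcongr
  calc (1 / sinh x) ^ 2 ≤ (4 * exp (-x)) ^ 2 := by gcongr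
    _ = 16 * exp (-(2 * x)) := by rw [mul_pow, ← exp_nat_mul]; norm_num

noncomputable def rcWeight (κ : ℝ) : ℝ :=
  (9 * π ^ 2 / 16) * κ ^ 4 * (1 + κ ^ 2) ^ 2 / ((κ ^ 2 + 9 / 4) * (κ ^ 2 + 1 / 4)) *
    (1 / sinh (π * κ)) ^ 2

lemma Rc_eq_integral_rcWeight (z : ℂ) :
    Rc z = ∫ κ in Ioi (1 : ℝ), (rcWeight κ : ℂ) * (z + (κ : ℂ) ^ 2 + 1)⁻¹ := rfl

lemma rcWeight_nonneg (κ : ℝ) : 0 ≤ rcWeight κ := by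
  unfold rcWeight; positivity

lemma rcWeight_le {κ : ℝ} (hκ : 1 ≤ κ) : rcWeight κ ≤ 216 * π ^ 2 * exp (-κ) := by
  have hrat : (1 + κ ^ 2) ^ 2 / ((κ ^ 2 + 9 / 4) * (κ ^ 2 + 1 / 4)) ≤ 1 := by
    rw [div_le_one (by positivity)]
    nlinarith
  have hπκ : 1 ≤ π * κ := by nlinarith [pi_gt_three]
  calc rcWeight κ
      = 9 * π ^ 2 / 16 * κ ^ 4 * ((1 + κ ^ 2) ^ 2 / ((κ ^ 2 + 9 / 4) * (κ ^ 2 + 1 / 4))) *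
          (1 / sinh (π * κ)) ^ 2 := by unfold rcWeight; ring
    _ ≤ 9 * π ^ 2 / 16 * (24 * exp κ) * 1 * (16 * exp (-(2 * (π * κ)))) := by
        gcongr
        · exact pow_four_le_exp (by linarith)
        · exact one_div_sinh_sq_le hπκ
    _ = 216 * π ^ 2 * exp (κ + -(2 * (π * κ))) := by rw [exp_add]; ring
    _ ≤ 216 * π ^ 2 * exp (-κ) := by gcongr; nlinarith [pi_gt_three]

lemma norm_setIntegral_Ioi_mul_inv_le {w : ℝ → ℝ} {C : ℝ} (hw₀ : ∀ κ, 1 < κ → 0 ≤ w κ)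
    (hwC : ∀ κ, 1 < κ → w κ ≤ C * exp (-κ)) {z : ℂ} (hz : -2 < z.re) :
    ‖∫ κ in Ioi (1 : ℝ), (w κ : ℂ) * (z + (κ : ℂ) ^ 2 + 1)⁻¹‖ ≤ C * exp (-1) / (z.re + 2) := by
  have hz2 : 0 < z.re + 2 := by linarith
  have hpointwise : ∀ κ, 1 < κ →
      ‖(w κ : ℂ) * (z + (κ : ℂ) ^ 2 + 1)⁻¹‖ ≤ C / (z.re + 2) * exp (-κ) := by
    intro κ hκ
    have hre : z.re + 2 ≤ (z + (κ : ℂ) ^ 2 + 1).re := by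
      simp only [Complex.add_re, ← Complex.ofReal_pow, Complex.ofReal_re, Complex.one_re]
      nlinarith
    rw [norm_mul, Complex.norm_real, norm_of_nonneg (hw₀ κ hκ), div_mul_eq_mul_div,
      div_eq_mul_inv]
    exact mul_le_mul (hwC κ hκ) (Complex.norm_inv_le_inv_of_le_re hz2 hre) (norm_nonneg _)
      ((hw₀ κ hκ).trans (hwC κ hκ))
  calc ‖∫ κ in Ioi (1 : ℝ), (w κ : ℂ) * (z + (κ : ℂ) ^ 2 + 1)⁻¹‖
      ≤ ∫ κ in Ioi (1 : ℝ), ‖(w κ : ℂ) * (z + (κ : ℂ) ^ 2 + 1)⁻¹‖ :=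
        norm_integral_le_integral_norm _
    _ ≤ ∫ κ in Ioi (1 : ℝ), C / (z.re + 2) * exp (-κ) := by
        refine integral_mono_of_nonneg (ae_of_all _ fun _ ↦ norm_nonneg _) ?_ ?_
        · simpa using (exp_neg_integrableOn_Ioi 1 one_pos).const_mul (C / (z.re + 2))
        · exact (ae_restrict_mem measurableSet_Ioi).mono hpointwise
    _ = C * exp (-1) / (z.re + 2) := by rw [integral_const_mul, integral_exp_neg_Ioi]; ring

lemma norm_Rc_le {z : ℂ} (hz : -2 < z.re) : ‖Rc z‖ ≤ 216 * π ^ 2 * exp (-1) / (z.re + 2) := by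
  rw [Rc_eq_integral_rcWeight]
  exact norm_setIntegral_Ioi_mul_inv_le (fun κ _ ↦ rcWeight_nonneg κ)
    (fun _ hκ ↦ rcWeight_le hκ.le) hz

lemma norm_Rd_le {z : ℂ} (hz : 5 / 4 < z.re) : ‖Rd z‖ ≤ π ^ 2 / (z.re - 5 / 4) := by
  have hpos : 0 < z.re - 5 / 4 := by linarith
  have h₁ : ‖(z - 5 / 4)⁻¹‖ ≤ (z.re - 5 / 4)⁻¹ :=
    Complex.norm_inv_le_inv_of_le_re hpos (by simp)
  have h₂ : ‖(z + 3 / 4)⁻¹‖ ≤ (z.re - 5 / 4)⁻¹ :=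
    Complex.norm_inv_le_inv_of_le_re hpos <| by
      simp only [Complex.add_re, Complex.div_ofNat_re, Complex.re_ofNat]
      linarith
  calc ‖Rd z‖
      ≤ 6075 * π ^ 2 / 8192 * ‖(z - 5 / 4)⁻¹‖ + 81 * π ^ 2 / 8192 * ‖(z + 3 / 4)⁻¹‖ := by
        refine (norm_sub_le _ _).trans_eq ?_
        simp [Complex.norm_real, abs_of_pos pi_pos]
    _ ≤ 6075 * π ^ 2 / 8192 * (z.re - 5 / 4)⁻¹ + 81 * π ^ 2 / 8192 * (z.re - 5 / 4)⁻¹ := by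
        gcongr
    _ ≤ π ^ 2 / (z.re - 5 / 4) := by
        rw [div_eq_mul_inv (π ^ 2)]
        nlinarith [inv_pos.2 hpos, sq_nonneg π]

lemma norm_R_le {z : ℂ} (hz : 5 / 4 < z.re) : ‖R z‖ ≤ 217 * π ^ 2 / (z.re - 5 / 4) := by
  have hRc : ‖Rc z‖ ≤ 216 * π ^ 2 / (z.re - 5 / 4) :=
    calc ‖Rc z‖ ≤ 216 * π ^ 2 * exp (-1) / (z.re + 2) := norm_Rc_le (by linarith)
      _ ≤ 216 * π ^ 2 * 1 / (z.re - 5 / 4) := by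
          gcongr
          · exact exp_le_one_iff.2 (by norm_num)
          · linarith
      _ = 216 * π ^ 2 / (z.re - 5 / 4) := by rw [mul_one]
  calc ‖R z‖ ≤ ‖Rd z‖ + ‖Rc z‖ := norm_add_le _ _
    _ ≤ π ^ 2 / (z.re - 5 / 4) + 216 * π ^ 2 / (z.re - 5 / 4) := add_le_add (norm_Rd_le hz) hRc
    _ = 217 * π ^ 2 / (z.re - 5 / 4) := by ring

/-- If `0 ≤ -α < β`, then there is `ℓ < -5/4` such that every solution
satisfies `Re λ < -ℓ`. -/
theorem stmt3 (α β : ℝ) (hα : 0 ≤ -α) (hαβ : -α < β) :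
    ∃ ℓ : ℝ, ℓ < -(5 / 4) ∧ ∀ z : ℂ, IsSolution α β ℓ z → z.re < -ℓ := by
  set M := 217 * π ^ 2
  have hM : 0 < M := by positivity
  have hsum : 0 < α + β := by linarith
  have hgap : 0 < 2 * M / (α + β) := by positivity
  refine ⟨-(5 / 4 + 2 * M / (α + β)), by linarith, fun z hz ↦ ?_⟩
  obtain ⟨-, -, heq⟩ := hz
  by_contra! hre
  set w := 1 + z + ((-(5 / 4 + 2 * M / (α + β)) : ℝ) : ℂ)
  have hsqrt : 1 ≤ (w ^ (1 / 2 : ℂ)).re := by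
    have hw : 1 ≤ w.re := by
      simp only [w, Complex.add_re, Complex.one_re, Complex.ofReal_re]
      linarith
    simpa using (Real.sqrt_le_sqrt hw).trans (Complex.sqrt_re_le_re_cpow_half w)
  have hlower : α + β ≤ (R z).re := by
    rw [← heq]
    simp only [Complex.add_re, Complex.ofReal_re, Complex.re_ofReal_mul]
    nlinarith
  have hupper : (R z).re ≤ (α + β) / 2 :=
    calc (R z).re ≤ ‖R z‖ := Complex.re_le_norm _
      _ ≤ M / (z.re - 5 / 4) := norm_R_le (by linarith)
      _ ≤ M / (2 * M / (α + β)) := by gcongr; linarith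
      _ = (α + β) / 2 := by field_simp
  linarith
end

section
/- There exists c > 0 such that for every λ in the domain D of R with Re λ > c, one has Re R(λ) > 0. -/
open MeasureTheory

lemma Rd_re_pos (z : ℂ) (hx : 2 < z.re) : 0 < (Rd z).re := by
  set a := z.re with ha
  set b := z.im with hb
  have hpi : (0:ℝ) < Real.pi ^ 2 := by positivity
  have e1 : (6075 * (Real.pi : ℂ) ^ 2 / 8192) = ((6075 * Real.pi ^ 2 / 8192 : ℝ) : ℂ) := by
    push_cast; ring
  have e2 : (81 * (Real.pi : ℂ) ^ 2 / 8192) = ((81 * Real.pi ^ 2 / 8192 : ℝ) : ℂ) := by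
    push_cast; ring
  have r1 : ((z - 5/4)⁻¹).re = (a - 5/4) / ((a - 5/4)^2 + b^2) := by
    rw [Complex.inv_re, Complex.normSq_apply]
    simp [Complex.sub_re, Complex.sub_im, ← ha, ← hb]
    norm_num
    ring_nf
  have r2 : ((z + 3/4)⁻¹).re = (a + 3/4) / ((a + 3/4)^2 + b^2) := by
    rw [Complex.inv_re, Complex.normSq_apply]
    simp [Complex.add_re, Complex.add_im, ← ha, ← hb]
    norm_num
    ring_nf
  have hRd : (Rd z).re = (6075 * Real.pi^2/8192) * ((a - 5/4) / ((a - 5/4)^2 + b^2))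
      - (81 * Real.pi^2/8192) * ((a + 3/4) / ((a + 3/4)^2 + b^2)) := by
    rw [Rd, e1, e2, Complex.sub_re, Complex.re_ofReal_mul, Complex.re_ofReal_mul, r1, r2]
  have h1 : (0:ℝ) < (a - 5/4)^2 + b^2 := by nlinarith [sq_nonneg b]
  have h2 : (0:ℝ) < (a + 3/4)^2 + b^2 := by nlinarith [sq_nonneg b]
  rw [hRd, sub_pos, mul_div_assoc', mul_div_assoc', div_lt_div_iff₀ h2 h1]
  have key : 0 < 6075 * (a - 5/4) * ((a + 3/4)^2 + b^2)
      - 81 * (a + 3/4) * ((a - 5/4)^2 + b^2) := by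
    nlinarith [sq_nonneg b, mul_pos (show (0:ℝ) < a - 5/4 by linarith)
      (show (0:ℝ) < a + 3/4 by linarith)]
  nlinarith [mul_pos hpi key]

lemma Rc_re_nonneg (z : ℂ) (hx : 2 < z.re) : 0 ≤ (Rc z).re := by
  rw [Rc]
  by_cases hI : Integrable (fun κ : ℝ =>
      (((9 * Real.pi ^ 2 / 16) * κ ^ 4 * (1 + κ ^ 2) ^ 2 /
        ((κ ^ 2 + 9 / 4) * (κ ^ 2 + 1 / 4)) *
        (1 / Real.sinh (Real.pi * κ)) ^ 2 : ℝ) : ℂ) * (z + (κ : ℂ) ^ 2 + 1)⁻¹)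
      (volume.restrict (Set.Ioi (1:ℝ)))
  · have h0 := integral_re hI
    simp only [RCLike.re_to_complex] at h0
    rw [← h0]
    apply setIntegral_nonneg measurableSet_Ioi
    intro κ _
    rw [Complex.re_ofReal_mul]
    apply mul_nonneg (by positivity)
    rw [Complex.inv_re]
    apply div_nonneg _ (Complex.normSq_nonneg _)
    have : (z + (κ : ℂ) ^ 2 + 1).re = z.re + κ ^ 2 + 1 := by
      simp [Complex.add_re]
      norm_cast
    rw [this]
    nlinarith [sq_nonneg κ]
  · rw [integral_undef hI]
    simp

/-- There exists `c > 0` such that `Re R(λ) > 0` whenever `λ ∈ D` and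
`Re λ > c`. -/
theorem stmt7 :
    ∃ c : ℝ, 0 < c ∧ ∀ z : ℂ, z ∈ Dom → c < z.re → 0 < (R z).re := by
  refine ⟨2, by norm_num, fun z _ hx => ?_⟩
  have h : (R z).re = (Rd z).re + (Rc z).re := by simp [R]
  rw [h]
  have h1 := Rd_re_pos z hx
  have h2 := Rc_re_nonneg z hx
  linarith
end

section
/- For every λ ∈ ℂ with Re λ > (75·(5/4) + 3/4)/74 = 189/148, one has Re R_d(λ) > 0; equivalently, writing λ = a + ib with a > 189/148, one has 75·(a − 5/4)/((a − 5/4)² + b²) − (a + 3/4)/((a + 3/4)² + b²) > 0. -/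
open MeasureTheory

/-- For `Re λ > 189/148`, `Re R_d(λ) > 0`; equivalently the stated real
inequality holds for `a = Re λ`, `b = Im λ`. -/
theorem stmt12 (z : ℂ) (h : 189 / 148 < z.re) :
    0 < (Rd z).re ∧
      0 < 75 * (z.re - 5 / 4) / ((z.re - 5 / 4) ^ 2 + z.im ^ 2)
        - (z.re + 3 / 4) / ((z.re + 3 / 4) ^ 2 + z.im ^ 2) := by
  set a := z.re with ha
  set b := z.im with hb
  have ha1 : (0:ℝ) < a - 5/4 := by linarith
  have ha2 : (0:ℝ) < a + 3/4 := by linarith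
  have hD1 : (0:ℝ) < (a - 5/4)^2 + b^2 := by positivity
  have hD2 : (0:ℝ) < (a + 3/4)^2 + b^2 := by positivity
  have key : (a + 3/4)/((a + 3/4)^2 + b^2) < 75*(a - 5/4)/((a - 5/4)^2 + b^2) := by
    rw [div_lt_div_iff₀ hD2 hD1]
    nlinarith [sq_nonneg b, mul_pos ha1 ha2, mul_pos (mul_pos ha1 ha2) ha2]
  have key2 : 0 < 75 * (a - 5/4) / ((a - 5/4)^2 + b^2) - (a + 3/4)/((a + 3/4)^2 + b^2) :=
    sub_pos.mpr key
  refine ⟨?_, key2⟩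
  have hpi : (0:ℝ) < Real.pi ^ 2 := by positivity
  have hcast : Rd z = ((6075*Real.pi^2/8192 : ℝ) : ℂ) * (z - 5/4)⁻¹
      - ((81*Real.pi^2/8192 : ℝ) : ℂ) * (z + 3/4)⁻¹ := by
    unfold Rd; push_cast; ring
  have e1 : ((z - 5/4)⁻¹).re = (a - 5/4)/((a - 5/4)^2 + b^2) := by
    rw [Complex.inv_re, Complex.normSq_apply]
    simp [Complex.sub_re, Complex.sub_im, ← ha, ← hb]
    ring_nf
  have e2 : ((z + 3/4)⁻¹).re = (a + 3/4)/((a + 3/4)^2 + b^2) := by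
    rw [Complex.inv_re, Complex.normSq_apply]
    simp [Complex.add_re, Complex.add_im, ← ha, ← hb]
    ring_nf
  have hre : (Rd z).re = (81 * Real.pi ^ 2 / 8192) *
      (75 * (a - 5/4) / ((a - 5/4)^2 + b^2) - (a + 3/4)/((a + 3/4)^2 + b^2)) := by
    rw [hcast]
    simp only [Complex.sub_re, Complex.mul_re, Complex.ofReal_re, Complex.ofReal_im,
      zero_mul, sub_zero, e1, e2]
    ring
  rw [hre]
  positivity
end
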